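/- Let {A_i}_{i∈E} satisfy the Fano-non-Fano condition, each with support of cardinality q, and let U be a random variable with cardinality at most q. Then the conjunction [A_1 ≤ι A_2U ∧ A_2 ≤ι A_1U ∧ A_3 ≤ι A_123U] holds if and only if U ≐ A_12 (i.e., U ≤ι A_12 and A_12 ≤ι U). -/

import Mathlib

/-! For fixed `A_2 = y`, the map `u ↦ A_1` given by `A_1 ≤ι A_2 U` must hit all `q` values of
`A_1` (as `A_1 ⟂ A_2`), while `U` takes at most `q` values; so it is injective and `U` is
determined by `(A_1, A_2)`. Likewise `A_3 ≤ι A_123 U` makes `U` a function of `(A_3, A_123)`,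
hence of `(A_3, A_12)`. Now `(A_1, A_2)` determines both `U` and `A_12` and is independent of
`A_3`, so freezing `A_3` at one value gives `U ≤ι A_12`. In the same way `A_12 ≤ι A_1 U`,
`U ≤ι A_12` and `A_1 ⟂ A_12` give `A_12 ≤ι U`. The converse follows from the `tri` relations. -/

open scoped Classical

noncomputable section

/-- The probability of the event `S` under the probability mass function `p`. -/
def Pr {Ω : Type} (p : Ω → ℝ) (S : Set Ω) : ℝ := ∑' ω : S, p ω

/-- `p` is a probability mass function on the sample space `Ω`. -/
def IsProb {Ω : Type} (p : Ω → ℝ) : Prop := (∀ ω, 0 ≤ p ω) ∧ Pr p Set.univ = 1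

/-- The support of a random variable `X`: the set of values attained with positive
probability. -/
def supp {Ω α : Type} (p : Ω → ℝ) (X : Ω → α) : Set α := {a | 0 < Pr p {ω | X ω = a}}

/-- `X` is almost surely a function of `Y` (written `X ≤ι Y` in the paper). -/
def FuncOf {Ω α β : Type} (p : Ω → ℝ) (X : Ω → α) (Y : Ω → β) : Prop :=
  ∃ f : β → α, Pr p {ω | X ω = f (Y ω)} = 1

/-- The random variables `X` and `Y` are independent. -/
def IndepRV {Ω α β : Type} (p : Ω → ℝ) (X : Ω → α) (Y : Ω → β) : Prop :=
  ∀ (a : α) (b : β), Pr p {ω | X ω = a ∧ Y ω = b} = Pr p {ω | X ω = a} * Pr p {ω | Y ω = b}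

/-- The random variables `X`, `Y`, `Z` are mutually independent:
`X ⟂ Y` and `(X, Y) ⟂ Z`. -/
def Indep3 {Ω α β γ : Type} (p : Ω → ℝ) (X : Ω → α) (Y : Ω → β) (Z : Ω → γ) : Prop :=
  IndepRV p X Y ∧ IndepRV p (fun ω => (X ω, Y ω)) Z

/-- The predicate `tri(X, Y, Z)`: each variable is a.s. a function of the other two, and the
three variables are pairwise independent. -/
def tri {Ω α β γ : Type} (p : Ω → ℝ) (X : Ω → α) (Y : Ω → β) (Z : Ω → γ) : Prop :=
  FuncOf p X (fun ω => (Y ω, Z ω)) ∧ FuncOf p Y (fun ω => (X ω, Z ω)) ∧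
    FuncOf p Z (fun ω => (X ω, Y ω)) ∧
    IndepRV p X Y ∧ IndepRV p X Z ∧ IndepRV p Y Z

/- The ground set `E = {1,2,3,12,13,23,123}` is represented by `Fin 7`, where
`0 ↦ 1`, `1 ↦ 2`, `2 ↦ 3`, `3 ↦ 12`, `4 ↦ 13`, `5 ↦ 23`, `6 ↦ 123`. -/

/-- `{i,j,k}` is one of the dependent 3-sets of the non-Fano matroid, i.e. one of
`{1,2,12}, {1,3,13}, {2,3,23}, {1,23,123}, {2,13,123}, {3,12,123}`. -/
def inDN (i j k : Fin 7) : Prop :=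
  ({i, j, k} : Finset (Fin 7)) ∈
    ({{0, 1, 3}, {0, 2, 4}, {1, 2, 5}, {0, 5, 6}, {1, 4, 6}, {2, 3, 6}} :
      Finset (Finset (Fin 7)))

/-- `{i,j,k}` is a dependent 3-set of the Fano matroid (`D_F = D_N ∪ {{12,13,23}}`). -/
def inDF (i j k : Fin 7) : Prop :=
  inDN i j k ∨ ({i, j, k} : Finset (Fin 7)) = {3, 4, 5}

/-- `{i,j,k}` is an independent 3-set of the Fano matroid: a 3-element subset of `E`
not in `D_F`. -/
def inIF (i j k : Fin 7) : Prop :=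
  ({i, j, k} : Finset (Fin 7)).card = 3 ∧ ¬ inDF i j k

/-- The Fano-non-Fano condition on the seven random variables `A 0, …, A 6`
(representing `A_1, A_2, A_3, A_12, A_13, A_23, A_123`): `tri` holds for every triple in
`D_N`, and mutual independence holds for every triple in `I_F`. -/
def fnf {Ω : Type} (p : Ω → ℝ) {α : Fin 7 → Type} (A : ∀ i, Ω → α i) : Prop :=
  (∀ i j k, inDN i j k → tri p (A i) (A j) (A k)) ∧
  (∀ i j k, inIF i j k → Indep3 p (A i) (A j) (A k))

section Probability

variable {Ω : Type} {p : Ω → ℝ}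

lemma IsProb.summable (hp : IsProb p) : Summable p := by
  by_contra h
  have h1 := hp.2
  rw [Pr, tsum_univ, tsum_eq_zero_of_not_summable h] at h1
  exact zero_ne_one h1

lemma IsProb.pr_eq_zero_iff (hp : IsProb p) {S : Set Ω} : Pr p S = 0 ↔ ∀ ω ∈ S, p ω = 0 := by
  have hS : Summable fun ω : S => p ω := hp.summable.subtype S
  rw [Pr, ← hS.hasSum_iff, hasSum_zero_iff_of_nonneg fun ω => hp.1 _]
  simp [funext_iff]

lemma IsProb.pr_pos_iff (hp : IsProb p) {S : Set Ω} : 0 < Pr p S ↔ ∃ ω ∈ S, 0 < p ω := by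
  have hnonneg : 0 ≤ Pr p S := tsum_nonneg fun ω => hp.1 ω
  simp only [hnonneg.lt_iff_ne', ne_eq, hp.pr_eq_zero_iff, not_forall, exists_prop,
    (hp.1 _).lt_iff_ne']

lemma IsProb.pr_eq_one_iff (hp : IsProb p) {S : Set Ω} : Pr p S = 1 ↔ ∀ ω, 0 < p ω → ω ∈ S := by
  have hsplit : Pr p S + Pr p Sᶜ = 1 :=
    ((hp.summable.subtype S).tsum_add_tsum_compl (hp.summable.subtype Sᶜ)).trans
      ((tsum_univ p).symm.trans hp.2)
  rw [show Pr p S = 1 ↔ Pr p Sᶜ = 0 by constructor <;> intro <;> linarith, hp.pr_eq_zero_iff]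
  refine forall_congr' fun ω => ⟨fun h hω => ?_, fun h hω => ?_⟩
  · by_contra hS
    exact hω.ne' (h hS)
  · by_contra hne
    exact hω (h ((hp.1 ω).lt_of_ne' hne))

lemma IsProb.exists_pos (hp : IsProb p) : ∃ ω, 0 < p ω := by
  simpa using hp.pr_pos_iff.1 (hp.2 ▸ one_pos : 0 < Pr p Set.univ)

variable {α β : Type}

lemma IsProb.mem_supp (hp : IsProb p) (X : Ω → α) {ω : Ω} (hω : 0 < p ω) : X ω ∈ supp p X :=
  hp.pr_pos_iff.2 ⟨ω, rfl, hω⟩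

lemma IndepRV.symm {X : Ω → α} {Y : Ω → β} (h : IndepRV p X Y) : IndepRV p Y X := fun b a => by
  rw [mul_comm, ← h a b]
  simp only [and_comm]

lemma IndepRV.exists_of_mem_supp (hp : IsProb p) {X : Ω → α} {Y : Ω → β} (h : IndepRV p X Y)
    {x : α} {y : β} (hx : x ∈ supp p X) (hy : y ∈ supp p Y) :
    ∃ ω, 0 < p ω ∧ X ω = x ∧ Y ω = y := by
  have hpos : 0 < Pr p {ω | X ω = x ∧ Y ω = y} := h x y ▸ mul_pos hx hy
  obtain ⟨ω, hω, hpω⟩ := hp.pr_pos_iff.1 hpos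
  exact ⟨ω, hpω, hω⟩

end Probability

section FuncOf

variable {Ω α β γ δ : Type} {p : Ω → ℝ}

lemma IsProb.funcOf_iff (hp : IsProb p) {X : Ω → α} {Y : Ω → β} :
    FuncOf p X Y ↔ ∃ f : β → α, ∀ ω, 0 < p ω → X ω = f (Y ω) := by
  simp only [FuncOf, hp.pr_eq_one_iff, Set.mem_ofPred_eq]

lemma IsProb.funcOf_of_factorsThrough (hp : IsProb p) {X : Ω → α} {Y : Ω → β}
    (h : ∀ ω ω', 0 < p ω → 0 < p ω' → Y ω = Y ω' → X ω = X ω') : FuncOf p X Y := by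
  obtain ⟨ω₀, -⟩ := hp.exists_pos
  have hfac : Function.FactorsThrough (fun ω : {ω // 0 < p ω} => X ω) (fun ω => Y ω) :=
    fun ω ω' hY => h ω ω' ω.2 ω'.2 hY
  exact hp.funcOf_iff.2 ⟨Function.extend (fun ω : {ω // 0 < p ω} => Y ω) (fun ω => X ω)
    fun _ => X ω₀, fun ω hω => (hfac.extend_apply _ ⟨ω, hω⟩).symm⟩

lemma funcOf_refl (hp : IsProb p) (X : Ω → α) : FuncOf p X X :=
  hp.funcOf_iff.2 ⟨id, fun _ _ => rfl⟩

lemma funcOf_fst (hp : IsProb p) (X : Ω → α) (Y : Ω → β) :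
    FuncOf p X (fun ω => (X ω, Y ω)) :=
  hp.funcOf_iff.2 ⟨Prod.fst, fun _ _ => rfl⟩

lemma funcOf_snd (hp : IsProb p) (X : Ω → α) (Y : Ω → β) :
    FuncOf p Y (fun ω => (X ω, Y ω)) :=
  hp.funcOf_iff.2 ⟨Prod.snd, fun _ _ => rfl⟩

lemma FuncOf.trans (hp : IsProb p) {X : Ω → α} {Y : Ω → β} {Z : Ω → γ}
    (hXY : FuncOf p X Y) (hYZ : FuncOf p Y Z) : FuncOf p X Z := by
  obtain ⟨f, hf⟩ := hp.funcOf_iff.1 hXY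
  obtain ⟨g, hg⟩ := hp.funcOf_iff.1 hYZ
  exact hp.funcOf_iff.2 ⟨f ∘ g, fun ω hω => (hf ω hω).trans (congrArg f (hg ω hω))⟩

lemma FuncOf.prodMk (hp : IsProb p) {X : Ω → α} {Y : Ω → β} {Z : Ω → γ}
    (hXZ : FuncOf p X Z) (hYZ : FuncOf p Y Z) : FuncOf p (fun ω => (X ω, Y ω)) Z := by
  obtain ⟨f, hf⟩ := hp.funcOf_iff.1 hXZ
  obtain ⟨g, hg⟩ := hp.funcOf_iff.1 hYZ
  exact hp.funcOf_iff.2 ⟨fun z => (f z, g z), fun ω hω => Prod.ext (hf ω hω) (hg ω hω)⟩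

lemma funcOf_prod_of_funcOf_of_ncard_le (hp : IsProb p) {X : Ω → α} {Y : Ω → β} {U : Ω → γ}
    (hXY : IndepRV p X Y) (hX : FuncOf p X (fun ω => (Y ω, U ω)))
    (hU : (supp p U).Finite) (hcard : (supp p U).ncard ≤ (supp p X).ncard) :
    FuncOf p U (fun ω => (X ω, Y ω)) := by
  obtain ⟨f, hf⟩ := hp.funcOf_iff.1 hX
  refine hp.funcOf_of_factorsThrough fun ω ω' hω hω' hXY' => ?_
  obtain ⟨hXω, hYω⟩ := Prod.mk.inj hXY'
  set T := U '' {ω' | 0 < p ω' ∧ Y ω' = Y ω}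
  have hTU : T ⊆ supp p U := by
    rintro _ ⟨ω', ⟨hω', -⟩, rfl⟩
    exact hp.mem_supp U hω'
  have hTfin : T.Finite := hU.subset hTU
  have hXT : supp p X ⊆ (fun u => f (Y ω, u)) '' T := by
    intro x hx
    obtain ⟨ω', hω', rfl, hY⟩ := hXY.exists_of_mem_supp hp hx (hp.mem_supp Y hω)
    exact ⟨U ω', ⟨ω', ⟨hω', hY⟩, rfl⟩, by rw [hf ω' hω', hY]⟩
  have hinj : Set.InjOn (fun u => f (Y ω, u)) T := by
    refine (Set.ncard_image_iff hTfin).1 (le_antisymm (Set.ncard_image_le hTfin) ?_)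
    calc T.ncard ≤ (supp p U).ncard := Set.ncard_le_ncard hTU hU
      _ ≤ (supp p X).ncard := hcard
      _ ≤ _ := Set.ncard_le_ncard hXT (hTfin.image _)
  refine hinj ⟨ω, ⟨hω, rfl⟩, rfl⟩ ⟨ω', ⟨hω', hYω.symm⟩, rfl⟩ ?_
  change f (Y ω, U ω) = f (Y ω, U ω')
  rw [← hf ω hω, hXω, hYω, ← hf ω' hω']

lemma funcOf_of_funcOf_prod_of_indepRV (hp : IsProb p) {U : Ω → α} {V : Ω → β} {W : Ω → γ}
    {Z : Ω → δ} (hUW : FuncOf p U W) (hUZV : FuncOf p U (fun ω => (Z ω, V ω)))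
    (hVW : FuncOf p V W) (hWZ : IndepRV p W Z) : FuncOf p U V := by
  obtain ⟨f, hf⟩ := hp.funcOf_iff.1 hUW
  obtain ⟨g, hg⟩ := hp.funcOf_iff.1 hUZV
  obtain ⟨h, hh⟩ := hp.funcOf_iff.1 hVW
  obtain ⟨ω₀, hω₀⟩ := hp.exists_pos
  refine hp.funcOf_iff.2 ⟨fun v => g (Z ω₀, v), fun ω hω => ?_⟩
  obtain ⟨ω', hω', hW, hZ⟩ :=
    hWZ.exists_of_mem_supp hp (hp.mem_supp W hω) (hp.mem_supp Z hω₀)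
  calc U ω = U ω' := by rw [hf ω hω, hf ω' hω', hW]
    _ = g (Z ω₀, V ω) := by rw [hg ω' hω', hZ, hh ω' hω', hh ω hω, hW]

end FuncOf

theorem chk12_iff_general {Ω : Type} (p : Ω → ℝ) (hp : IsProb p)
    {α : Fin 7 → Type} (A : ∀ i, Ω → α i)
    (hfnf : fnf p A) (q : ℕ)
    (hq : ∀ i, (supp p (A i)).ncard = q)
    {β : Type} (U : Ω → β) (hUfin : (supp p U).Finite)
    (hUcard : (supp p U).ncard ≤ q) :
    (FuncOf p (A 0) (fun ω => (A 1 ω, U ω)) ∧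
      FuncOf p (A 1) (fun ω => (A 0 ω, U ω)) ∧
      FuncOf p (A 2) (fun ω => (A 6 ω, U ω))) ↔
    (FuncOf p U (A 3) ∧ FuncOf p (A 3) U) := by
  obtain ⟨h013, h103, h301, i01, i03, -⟩ : tri p (A 0) (A 1) (A 3) :=
    hfnf.1 0 1 3 (by unfold inDN; decide)
  obtain ⟨h236, -, h623, -, i26, -⟩ : tri p (A 2) (A 3) (A 6) :=
    hfnf.1 2 3 6 (by unfold inDN; decide)
  have i012 : IndepRV p (fun ω => (A 0 ω, A 1 ω)) (A 2) :=
    (hfnf.2 0 1 2 (by unfold inIF inDF inDN; decide)).2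
  constructor
  · rintro ⟨h0, h1, h2⟩
    have hU01 := funcOf_prod_of_funcOf_of_ncard_le hp i01 h0 hUfin (hq 0 ▸ hUcard)
    have hU26 := funcOf_prod_of_funcOf_of_ncard_le hp i26 h2 hUfin (hq 2 ▸ hUcard)
    have hU23 := hU26.trans hp ((funcOf_fst hp _ _).prodMk hp h623)
    have hU3 := funcOf_of_funcOf_prod_of_indepRV hp hU01 hU23 h301 i012
    have h30U := h301.trans hp ((funcOf_fst hp _ _).prodMk hp h1)
    exact ⟨hU3, funcOf_of_funcOf_prod_of_indepRV hp (funcOf_refl hp _) h30U hU3 i03.symm⟩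
  · rintro ⟨-, h3U⟩
    have h3U_snd : ∀ {γ : Type} (X : Ω → γ), FuncOf p (A 3) (fun ω => (X ω, U ω)) :=
      fun X => h3U.trans hp (funcOf_snd hp X U)
    exact ⟨h013.trans hp ((funcOf_fst hp _ _).prodMk hp (h3U_snd _)),
      h103.trans hp ((funcOf_fst hp _ _).prodMk hp (h3U_snd _)),
      h236.trans hp ((h3U_snd _).prodMk hp (funcOf_fst hp _ _))⟩

/-- the `chk_12` subnetwork: let `{A_i}_{i∈E}` satisfy the Fano-non-Fano
condition, each with support of cardinality `q`, and let `U` be a random variable of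
cardinality at most `q`. Then
`A_1 ≤ι (A_2, U) ∧ A_2 ≤ι (A_1, U) ∧ A_3 ≤ι (A_123, U)` holds if and only if
`U ≐ A_12`, i.e. `U ≤ι A_12` and `A_12 ≤ι U`. -/
theorem chk12_iff {Ω : Type} (p : Ω → ℝ) (hp : IsProb p)
    {α : Fin 7 → Type} (A : ∀ i, Ω → α i) (hfin : ∀ i, (supp p (A i)).Finite)
    (hfnf : fnf p A) (q : ℕ)
    (hq : ∀ i, (supp p (A i)).ncard = q)
    {β : Type} (U : Ω → β) (hUfin : (supp p U).Finite)
    (hUcard : (supp p U).ncard ≤ q) :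
    (FuncOf p (A 0) (fun ω => (A 1 ω, U ω)) ∧
      FuncOf p (A 1) (fun ω => (A 0 ω, U ω)) ∧
      FuncOf p (A 2) (fun ω => (A 6 ω, U ω))) ↔
    (FuncOf p U (A 3) ∧ FuncOf p (A 3) U) :=
  chk12_iff_general p hp A hfnf q hq U hUfin hUcard

end
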